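/- arXiv:2604.02044 — 2 statements merged into one kernel-verified Lean document; each statement's English description precedes it below -/
import Mathlib

section
/- Let V(θ) = ‖θ‖ (Euclidean norm on ℝ^N) and let f_i(θ) = (K/N) Σ_j a_{ij} sin(θ_j - θ_i) be the Kuramoto drift with symmetric nonnegative connected adjacency matrix A and K > 0. Then for all θ with Σᵢ θᵢ = 0, θ ≠ 0, and all components θᵢ ∈ [-δ, δ] with δ ∈ (0, π/2), one has ⟨∇V(θ), f(θ)⟩ ≤ -(K C_δ λ₂ / N)·V(θ), where C_δ = sin(2δ)/(2δ) and λ₂ > 0 is the spectral gap of the Laplacian of A. -/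
/-!
By symmetry of `a`, the drift pairing `∑ θᵢ fᵢ` equals `-(K/2N) ∑ᵢⱼ aᵢⱼ dᵢⱼ sin dᵢⱼ` with
`dᵢⱼ = θᵢ - θⱼ ∈ [-2δ, 2δ]`. Concavity of `sin` on `[0, π]` gives `d sin d ≥ C_δ d²` there, and
`∑ᵢⱼ aᵢⱼ dᵢⱼ² = 2 θᵀLθ ≥ 2 λ₂ ‖θ‖²` on the hyperplane `∑ θᵢ = 0`. Dividing by `‖θ‖` gives the bound.
-/

open Real Finset Matrix

lemma sin_div_mul_le_sin {r x : ℝ} (hr : 0 < r) (hrπ : r ≤ π) (hx₀ : 0 ≤ x) (hxr : x ≤ r) :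
    sin r / r * x ≤ sin x := by
  have h := strictConcaveOn_sin_Icc.concaveOn.2 ⟨le_rfl, pi_pos.le⟩ ⟨hr.le, hrπ⟩
    (sub_nonneg.2 ((div_le_one hr).2 hxr)) (div_nonneg hx₀ hr.le) (by ring)
  have hx : x / r * r = x := div_mul_cancel₀ x hr.ne'
  simp only [smul_eq_mul, mul_zero, zero_add, sin_zero, hx] at h
  rwa [div_mul_comm]

lemma sin_div_mul_sq_le_mul_sin {r x : ℝ} (hr : 0 < r) (hrπ : r ≤ π) (hx : |x| ≤ r) :
    sin r / r * x ^ 2 ≤ x * sin x := by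
  have habs : x * sin x = |x| * sin |x| := by
    rcases abs_cases x with ⟨h, -⟩ | ⟨h, -⟩ <;> simp [h]
  rw [habs, ← sq_abs, sq, ← mul_assoc, mul_comm _ |x|]
  exact mul_le_mul_of_nonneg_left (sin_div_mul_le_sin hr hrπ (abs_nonneg x) hx) (abs_nonneg x)

section WeightedGraph

variable {ι : Type*} [Fintype ι] {a : ι → ι → ℝ}

lemma sum_sum_mul_swap (hsym : ∀ i j, a i j = a j i) (g : ι → ι → ℝ) :
    ∑ i, ∑ j, a i j * g j i = ∑ i, ∑ j, a i j * g i j := by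
  rw [Finset.sum_comm]
  exact sum_congr rfl fun i _ => sum_congr rfl fun j _ => by rw [hsym]

lemma dotProduct_mulVec_eq_sum_sum [DecidableEq ι] {L : Matrix ι ι ℝ}
    (hLdiag : ∀ i, L i i = ∑ j ∈ univ.erase i, a i j) (hLoff : ∀ i j, i ≠ j → L i j = -a i j)
    (θ : ι → ℝ) : θ ⬝ᵥ (L *ᵥ θ) = ∑ i, ∑ j, a i j * (θ i ^ 2 - θ i * θ j) := by
  refine sum_congr rfl fun i _ => ?_
  have hii : θ i ^ 2 - θ i * θ i = 0 := by ring
  simp only [mulVec, dotProduct, mul_sum]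
  rw [← add_sum_erase _ _ (mem_univ i), ← add_sum_erase _ _ (mem_univ i), hLdiag i, hii,
    mul_zero, zero_add, sum_mul, mul_sum, ← sum_add_distrib]
  refine sum_congr rfl fun j hj => ?_
  rw [hLoff i j (ne_of_mem_erase hj).symm]
  ring

lemma sum_sum_mul_sub_sq [DecidableEq ι] {L : Matrix ι ι ℝ} (hsym : ∀ i j, a i j = a j i)
    (hLdiag : ∀ i, L i i = ∑ j ∈ univ.erase i, a i j) (hLoff : ∀ i j, i ≠ j → L i j = -a i j)
    (θ : ι → ℝ) : ∑ i, ∑ j, a i j * (θ i - θ j) ^ 2 = 2 * (θ ⬝ᵥ (L *ᵥ θ)) := by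
  have hsplit : ∀ i j, a i j * (θ i - θ j) ^ 2 =
      a i j * (θ i ^ 2 - θ i * θ j) + a i j * (θ j ^ 2 - θ j * θ i) := fun i j => by ring
  simp only [hsplit, sum_add_distrib]
  rw [sum_sum_mul_swap hsym fun i j => θ i ^ 2 - θ i * θ j,
    dotProduct_mulVec_eq_sum_sum hLdiag hLoff]
  ring

lemma two_mul_sum_mul_sum_sin (hsym : ∀ i j, a i j = a j i) (θ : ι → ℝ) :
    2 * ∑ i, θ i * ∑ j, a i j * sin (θ j - θ i) =
      -∑ i, ∑ j, a i j * ((θ i - θ j) * sin (θ i - θ j)) := by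
  have hsplit : ∀ i j, a i j * ((θ i - θ j) * sin (θ i - θ j)) =
      -(a i j * (θ i * sin (θ j - θ i)) + a i j * (θ j * sin (θ i - θ j))) := fun i j => by
    rw [← neg_sub (θ i), sin_neg]
    ring
  simp only [hsplit, sum_neg_distrib, neg_neg, sum_add_distrib, mul_sum, mul_left_comm (θ _)]
  rw [sum_sum_mul_swap hsym fun i j => θ i * sin (θ j - θ i)]
  simp only [two_mul, sum_add_distrib]

lemma sin_div_mul_sum_sum_le {r : ℝ} (hr : 0 < r) (hrπ : r ≤ π)
    (hnonneg : ∀ i j, i ≠ j → 0 ≤ a i j) {θ : ι → ℝ} (hθ : ∀ i j, |θ i - θ j| ≤ r) :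
    sin r / r * ∑ i, ∑ j, a i j * (θ i - θ j) ^ 2 ≤
      ∑ i, ∑ j, a i j * ((θ i - θ j) * sin (θ i - θ j)) := by
  simp only [mul_sum]
  refine sum_le_sum fun i _ => sum_le_sum fun j _ => ?_
  rcases eq_or_ne i j with rfl | hij
  · simp
  · rw [mul_left_comm]
    exact mul_le_mul_of_nonneg_left (sin_div_mul_sq_le_mul_sin hr hrπ (hθ i j)) (hnonneg i j hij)

lemma mul_sum_sq_le_dotProduct_mulVec {L : Matrix ι ι ℝ} {lam : ℝ}
    (hlam : lam ∈ lowerBounds {r : ℝ | ∃ θ : ι → ℝ, θ ≠ 0 ∧ (∑ i, θ i) = 0 ∧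
      r = (θ ⬝ᵥ (L *ᵥ θ)) / ∑ i, (θ i) ^ 2})
    {θ : ι → ℝ} (hθ : ∑ i, θ i = 0) : lam * ∑ i, θ i ^ 2 ≤ θ ⬝ᵥ (L *ᵥ θ) := by
  rcases eq_or_ne θ 0 with rfl | hne
  · simp
  have hpos : 0 < ∑ i, θ i ^ 2 := by
    obtain ⟨i, hi⟩ := Function.ne_iff.mp hne
    exact sum_pos' (fun j _ => sq_nonneg _) ⟨i, mem_univ i, sq_pos_of_ne_zero hi⟩
  exact (le_div_iff₀ hpos).1 (hlam ⟨θ, hne, hθ, rfl⟩)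

end WeightedGraph
theorem kuramoto_lyapunov_decay_general (N : ℕ) (K : ℝ) (hK : 0 < K)
    (a : Matrix (Fin N) (Fin N) ℝ)
    (hsym : ∀ i j, a i j = a j i)
    (hnonneg : ∀ i j, i ≠ j → 0 ≤ a i j)
    (L : Matrix (Fin N) (Fin N) ℝ)
    (hLdiag : ∀ i, L i i = ∑ j ∈ Finset.univ.erase i, a i j)
    (hLoff : ∀ i j, i ≠ j → L i j = -a i j)
    (lam₂ : ℝ)
    (hlam : IsLeast {r : ℝ | ∃ θ : Fin N → ℝ, θ ≠ 0 ∧ (∑ i, θ i) = 0 ∧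
      r = (θ ⬝ᵥ (L *ᵥ θ)) / ∑ i, (θ i) ^ 2} lam₂)
    (δ : ℝ) (hδ0 : 0 < δ) (hδπ : δ < π / 2)
    (Cδ : ℝ) (hCδ : Cδ = Real.sin (2 * δ) / (2 * δ))
    (f : (Fin N → ℝ) → Fin N → ℝ)
    (hf : ∀ θ i, f θ i = (K / N) * ∑ j, a i j * Real.sin (θ j - θ i))
    (θ : Fin N → ℝ) (hzero : (∑ i, θ i) = 0)
    (hbox : ∀ i, θ i ∈ Set.Icc (-δ) δ) :
    ∑ i, (θ i / Real.sqrt (∑ i, (θ i) ^ 2)) * f θ i ≤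
      -(K * Cδ * lam₂ / N) * Real.sqrt (∑ i, (θ i) ^ 2) := by
  have hCδ0 : 0 ≤ Cδ := hCδ ▸ div_nonneg
    (sin_nonneg_of_nonneg_of_le_pi (by linarith) (by linarith)) (by linarith)
  have hspread : ∀ i j, |θ i - θ j| ≤ 2 * δ := fun i j => abs_sub_le_iff.2
    ⟨by linarith [(hbox i).2, (hbox j).1], by linarith [(hbox i).1, (hbox j).2]⟩
  have hchord := sin_div_mul_sum_sum_le (by linarith) (by linarith) hnonneg hspread
  rw [← hCδ, sum_sum_mul_sub_sq hsym hLdiag hLoff] at hchord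
  have hdrift := two_mul_sum_mul_sum_sin hsym θ
  have hgap := mul_le_mul_of_nonneg_left (mul_sum_sq_le_dotProduct_mulVec hlam.2 hzero) hCδ0
  have hpair : ∑ i, θ i * f θ i ≤ -(K * Cδ * lam₂ / N) * ∑ i, θ i ^ 2 := by
    calc ∑ i, θ i * f θ i = K / N * ∑ i, θ i * ∑ j, a i j * sin (θ j - θ i) := by
          rw [mul_sum]
          exact sum_congr rfl fun i _ => by rw [hf]; ring
      _ ≤ K / N * -(Cδ * (lam₂ * ∑ i, θ i ^ 2)) :=
          mul_le_mul_of_nonneg_left (by linarith) (div_nonneg hK.le N.cast_nonneg)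
      _ = -(K * Cδ * lam₂ / N) * ∑ i, θ i ^ 2 := by ring
  calc ∑ i, (θ i / √(∑ i, θ i ^ 2)) * f θ i = (∑ i, θ i * f θ i) / √(∑ i, θ i ^ 2) := by
        simp only [div_mul_eq_mul_div, sum_div]
    _ ≤ -(K * Cδ * lam₂ / N) * (∑ i, θ i ^ 2) / √(∑ i, θ i ^ 2) :=
        div_le_div_of_nonneg_right hpair (sqrt_nonneg _)
    _ = -(K * Cδ * lam₂ / N) * √(∑ i, θ i ^ 2) := by rw [mul_div_assoc, div_sqrt]

theorem kuramoto_lyapunov_decay (N : ℕ) (hN : 2 ≤ N) (K : ℝ) (hK : 0 < K)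
    (a : Matrix (Fin N) (Fin N) ℝ)
    (hsym : ∀ i j, a i j = a j i)
    (hnonneg : ∀ i j, i ≠ j → 0 ≤ a i j)
    (L : Matrix (Fin N) (Fin N) ℝ)
    (hLdiag : ∀ i, L i i = ∑ j ∈ Finset.univ.erase i, a i j)
    (hLoff : ∀ i j, i ≠ j → L i j = -a i j)
    (lam₂ : ℝ) (hlampos : 0 < lam₂)
    (hlam : IsLeast {r : ℝ | ∃ θ : Fin N → ℝ, θ ≠ 0 ∧ (∑ i, θ i) = 0 ∧
      r = (θ ⬝ᵥ (L *ᵥ θ)) / ∑ i, (θ i) ^ 2} lam₂)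
    (δ : ℝ) (hδ0 : 0 < δ) (hδπ : δ < π / 2)
    (Cδ : ℝ) (hCδ : Cδ = Real.sin (2 * δ) / (2 * δ))
    (f : (Fin N → ℝ) → Fin N → ℝ)
    (hf : ∀ θ i, f θ i = (K / N) * ∑ j, a i j * Real.sin (θ j - θ i))
    (θ : Fin N → ℝ) (hzero : (∑ i, θ i) = 0) (hne : θ ≠ 0)
    (hbox : ∀ i, θ i ∈ Set.Icc (-δ) δ) :
    ∑ i, (θ i / Real.sqrt (∑ i, (θ i) ^ 2)) * f θ i ≤
      -(K * Cδ * lam₂ / N) * Real.sqrt (∑ i, (θ i) ^ 2) :=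
  kuramoto_lyapunov_decay_general N K hK a hsym hnonneg L hLdiag hLoff lam₂ hlam δ hδ0 hδπ Cδ hCδ f
    hf θ hzero hbox
end

section
/- Let f_i(ϖ) = (K/N) Σ_j a_{ij} cos(θ_j - θ_i)(ϖ_j - ϖ_i) be the linearized Kuramoto frequency drift, with A symmetric nonnegative connected, K > 0, and suppose max_{i,j} |θ_i - θ_j| ≤ Δ < π/2. Then for all ϖ ∈ ℝ^N with Σᵢ ϖᵢ = 0 and ϖ ≠ 0, ⟨ϖ/‖ϖ‖, f(ϖ)⟩ ≤ -(K cos(Δ) λ₂ / N)·‖ϖ‖, where λ₂ > 0 is the spectral gap of the Laplacian of A. -/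
open Real Finset Matrix

lemma symm_sum_aux (N : ℕ) (b : Fin N → Fin N → ℝ) (hb : ∀ i j, b i j = b j i)
    (w : Fin N → ℝ) :
    ∑ i, ∑ j, b i j * (w i * (w i - w j)) =
      (1 / 2) * ∑ i, ∑ j, b i j * (w i - w j) ^ 2 := by
  have hcomm : ∑ i, ∑ j, b j i * (w j * (w j - w i)) =
      ∑ i, ∑ j, b i j * (w i * (w i - w j)) := Finset.sum_comm
  have key : ∑ i, ∑ j, (b i j * (w i * (w i - w j)) + b j i * (w j * (w j - w i))) =
      ∑ i, ∑ j, b i j * (w i - w j) ^ 2 := by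
    refine Finset.sum_congr rfl fun i _ => Finset.sum_congr rfl fun j _ => ?_
    rw [hb j i]; ring
  have expand : ∑ i, ∑ j, (b i j * (w i * (w i - w j)) + b j i * (w j * (w j - w i))) =
      (∑ i, ∑ j, b i j * (w i * (w i - w j))) +
        ∑ i, ∑ j, b j i * (w j * (w j - w i)) := by
    rw [← Finset.sum_add_distrib]
    exact Finset.sum_congr rfl fun i _ => Finset.sum_add_distrib
  rw [hcomm] at expand
  linarith [key, expand]

theorem frequency_lyapunov_decay (N : ℕ) (hN : 2 ≤ N) (K : ℝ) (hK : 0 < K)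
    (a : Matrix (Fin N) (Fin N) ℝ)
    (hsym : ∀ i j, a i j = a j i)
    (hnonneg : ∀ i j, i ≠ j → 0 ≤ a i j)
    (L : Matrix (Fin N) (Fin N) ℝ)
    (hLdiag : ∀ i, L i i = ∑ j ∈ Finset.univ.erase i, a i j)
    (hLoff : ∀ i j, i ≠ j → L i j = -a i j)
    (lam₂ : ℝ) (hlampos : 0 < lam₂)
    (hlam : IsLeast {r : ℝ | ∃ w : Fin N → ℝ, w ≠ 0 ∧ (∑ i, w i) = 0 ∧
      r = (w ⬝ᵥ (L *ᵥ w)) / ∑ i, (w i) ^ 2} lam₂)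
    (θ : Fin N → ℝ) (Δ : ℝ) (hΔ0 : 0 ≤ Δ) (hΔπ : Δ < π / 2)
    (hθ : ∀ i j, |θ i - θ j| ≤ Δ)
    (f : (Fin N → ℝ) → Fin N → ℝ)
    (hf : ∀ w i, f w i = (K / N) * ∑ j, a i j * Real.cos (θ j - θ i) * (w j - w i))
    (w : Fin N → ℝ) (hzero : (∑ i, w i) = 0) (hne : w ≠ 0) :
    ∑ i, (w i / Real.sqrt (∑ i, (w i) ^ 2)) * f w i ≤
      -(K * Real.cos Δ * lam₂ / N) * Real.sqrt (∑ i, (w i) ^ 2) := by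
  set s : ℝ := ∑ i, (w i) ^ 2 with hs_def
  have hNpos : (0:ℝ) < N := by
    have : 0 < N := by omega
    exact_mod_cast this
  have hs : 0 < s := by
    obtain ⟨i, hi⟩ := Function.ne_iff.mp hne
    have h1 : 0 < (w i) ^ 2 := pow_two_pos_of_ne_zero hi
    exact lt_of_lt_of_le h1 (Finset.single_le_sum (fun j _ => sq_nonneg (w j)) (Finset.mem_univ i))
  have hsqrt : 0 < Real.sqrt s := Real.sqrt_pos.mpr hs
  have hcosΔ : 0 < Real.cos Δ := Real.cos_pos_of_mem_Ioo ⟨by linarith [Real.pi_pos], hΔπ⟩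
  have hcos : ∀ i j : Fin N, Real.cos Δ ≤ Real.cos (θ j - θ i) := by
    intro i j
    rw [← Real.cos_abs (θ j - θ i)]
    exact Real.cos_le_cos_of_nonneg_of_le_pi (abs_nonneg _) (by linarith [Real.pi_pos]) (hθ j i)
  -- the symmetric cosine-weighted coefficient
  set b : Fin N → Fin N → ℝ := fun i j => a i j * Real.cos (θ j - θ i) with hb_def
  have hbsym : ∀ i j, b i j = b j i := by
    intro i j
    simp only [hb_def]
    rw [hsym i j, ← Real.cos_neg (θ j - θ i), neg_sub]
  -- Laplacian quadratic form
  have hLq : w ⬝ᵥ (L *ᵥ w) = ∑ i, ∑ j, a i j * (w i * (w i - w j)) := by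
    simp only [dotProduct, mulVec]
    refine Finset.sum_congr rfl fun i _ => ?_
    have h1 : ∑ j, L i j * w j = ∑ j ∈ Finset.univ.erase i, a i j * (w i - w j) := by
      rw [← Finset.add_sum_erase Finset.univ (fun j => L i j * w j) (Finset.mem_univ i),
        hLdiag i, Finset.sum_mul, ← Finset.sum_add_distrib]
      refine Finset.sum_congr rfl fun j hj => ?_
      rw [hLoff i j (Finset.ne_of_mem_erase hj).symm]
      ring
    rw [h1, Finset.mul_sum,
      ← Finset.add_sum_erase Finset.univ (fun j => a i j * (w i * (w i - w j)))
        (Finset.mem_univ i)]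
    rw [sub_self, mul_zero, mul_zero, zero_add]
    exact Finset.sum_congr rfl fun j _ => by ring
  have hQa : ∑ i, ∑ j, a i j * (w i * (w i - w j)) =
      (1 / 2) * ∑ i, ∑ j, a i j * (w i - w j) ^ 2 := symm_sum_aux N a hsym w
  -- the inner product with f
  have hSf : ∑ i, w i * f w i =
      -((K / N) * ((1 / 2) * ∑ i, ∑ j, b i j * (w i - w j) ^ 2)) := by
    rw [← symm_sum_aux N b hbsym w]
    have hterm : ∀ i, w i * f w i = -((K / N) * ∑ j, b i j * (w i * (w i - w j))) := by
      intro i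
      rw [hf, ← mul_assoc, Finset.mul_sum, Finset.mul_sum, ← Finset.sum_neg_distrib]
      refine Finset.sum_congr rfl fun j _ => ?_
      simp only [hb_def]
      ring
    rw [Finset.sum_congr rfl fun i _ => hterm i, Finset.sum_neg_distrib, Finset.mul_sum]
  -- cosine bound on the quadratic form
  have hQb : Real.cos Δ * ∑ i, ∑ j, a i j * (w i - w j) ^ 2 ≤
      ∑ i, ∑ j, b i j * (w i - w j) ^ 2 := by
    rw [Finset.mul_sum]
    refine Finset.sum_le_sum fun i _ => ?_
    rw [Finset.mul_sum]
    refine Finset.sum_le_sum fun j _ => ?_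
    rcases eq_or_ne i j with rfl | hij
    · simp
    · have h1 := hcos i j
      have h2 := hnonneg i j hij
      have h3 := sq_nonneg (w i - w j)
      simp only [hb_def]
      nlinarith [mul_le_mul_of_nonneg_left h1 (mul_nonneg h2 h3)]
  -- spectral gap bound
  have hmem : lam₂ ≤ (w ⬝ᵥ (L *ᵥ w)) / s := hlam.2 ⟨w, hne, hzero, rfl⟩
  have hquad : lam₂ * s ≤ w ⬝ᵥ (L *ᵥ w) := (le_div_iff₀ hs).mp hmem
  have hc : (0:ℝ) < K / N := div_pos hK hNpos
  have hS_le : ∑ i, w i * f w i ≤ -(K * Real.cos Δ * lam₂ / N) * s := by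
    have e2 : ∑ i, ∑ j, a i j * (w i - w j) ^ 2 = 2 * (w ⬝ᵥ (L *ᵥ w)) := by
      rw [hLq, hQa]; ring
    calc ∑ i, w i * f w i
        = -((K / N) * ((1 / 2) * ∑ i, ∑ j, b i j * (w i - w j) ^ 2)) := hSf
      _ ≤ -((K / N) * ((1 / 2) * (Real.cos Δ * ∑ i, ∑ j, a i j * (w i - w j) ^ 2))) := by
          apply neg_le_neg
          apply mul_le_mul_of_nonneg_left _ hc.le
          apply mul_le_mul_of_nonneg_left hQb (by norm_num)
      _ = -((K / N) * (Real.cos Δ * (w ⬝ᵥ (L *ᵥ w)))) := by rw [e2]; ring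
      _ ≤ -((K / N) * (Real.cos Δ * (lam₂ * s))) := by
          apply neg_le_neg
          exact mul_le_mul_of_nonneg_left (mul_le_mul_of_nonneg_left hquad hcosΔ.le) hc.le
      _ = -(K * Real.cos Δ * lam₂ / N) * s := by ring
  have hdiv : ∑ i, (w i / Real.sqrt s) * f w i = (∑ i, w i * f w i) / Real.sqrt s := by
    rw [Finset.sum_div]
    exact Finset.sum_congr rfl fun i _ => by ring
  rw [hdiv, div_le_iff₀ hsqrt, mul_assoc, Real.mul_self_sqrt hs.le]
  exact hS_le
end
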